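/- arXiv:1607.05468 — 3 statements merged into one kernel-verified Lean document; each statement's English description precedes it below -/
import Mathlib

section
/- Let R = K[x_1,...,x_k] be graded by W = [d_1,...,d_k] with gcd(d_1,...,d_k) = 1 and d = lcm(d_1,...,d_k). Then each polynomial P_i of the Hilbert quasi-polynomial P_R^W = {P_0,...,P_{d−1}} has degree exactly k−1, and its leading coefficient equals 1 / ((k−1)! · d_1 d_2 ··· d_k). -/
/-!
Let `d = lcm w` and `e i = d / w i`, so that `e i * w i = d`. Writing `a i = r i + e i * c i` with
`0 ≤ r i < e i` gives `∑ a i * w i = s r + d * ∑ c i` with `s r = ∑ r i * w i`. Hence `H(n)` is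
the sum, over the residue vectors `r ∈ ∏ ℤ/(e i)` with `s r ≡ n (mod d)`, of the number of
`c ∈ ℕ^k` with `∑ c i = (n - s r) / d`, which is `binom((n - s r) / d + k - 1, k - 1)`: for `n` in
a fixed class mod `d` and `n ≥ k d` this is a polynomial in `n` of degree `k - 1` with leading
coefficient `1 / ((k - 1)! d^(k - 1))`. As `gcd w = 1`, the map `r ↦ s r mod d` is a surjective
homomorphism `∏ ℤ/(e i) → ℤ/d`, so every class mod `d` contains `∏ e i / d = d^(k-1) / ∏ w i`
residue vectors.
-/

/-- The Hilbert function of `K[x_1,…,x_k]` graded by weights `w`: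
the number of `(a_1,…,a_k) ∈ ℕ^k` with `∑ aᵢ dᵢ = n`. -/
noncomputable def hilbFn (k : ℕ) (w : Fin k → ℕ) (n : ℕ) : ℕ :=
  Nat.card {a : Fin k → ℕ // ∑ i, a i * w i = n}

open Finset Polynomial

noncomputable def shiftedBinomPoly (K d s : ℕ) : ℚ[X] :=
  C (K.factorial : ℚ)⁻¹ * (ascPochhammer ℚ K).comp (C (d : ℚ)⁻¹ * X + C (1 - (s : ℚ) / d))

theorem eval_shiftedBinomPoly (K d s M : ℕ) (hd : d ≠ 0) :
    (shiftedBinomPoly K d s).eval ((s + d * M : ℕ) : ℚ) = (M + K).choose K := by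
  have hM : (d : ℚ)⁻¹ * (s + d * M : ℕ) + (1 - s / d) = ((M + 1 : ℕ) : ℚ) := by
    push_cast; field_simp; ring
  rw [shiftedBinomPoly, eval_mul, eval_C, eval_comp, eval_add, eval_mul, eval_C, eval_X, eval_C,
    hM, ascPochhammer_nat_eq_natCast_ascFactorial, Nat.ascFactorial_eq_factorial_mul_choose]
  push_cast
  field_simp

theorem natDegree_and_leadingCoeff_shiftedBinomPoly (K d s : ℕ) (hd : d ≠ 0) :
    (shiftedBinomPoly K d s).natDegree = K ∧
      (shiftedBinomPoly K d s).leadingCoeff = (K.factorial : ℚ)⁻¹ * ((d : ℚ)⁻¹) ^ K := by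
  have hd' : (d : ℚ)⁻¹ ≠ 0 := by simpa using hd
  have hfac : (K.factorial : ℚ)⁻¹ ≠ 0 := by simpa using K.factorial_ne_zero
  rw [shiftedBinomPoly, natDegree_C_mul hfac, leadingCoeff_mul, leadingCoeff_C, natDegree_comp,
    leadingCoeff_comp (by rw [natDegree_linear hd']; exact one_ne_zero), natDegree_linear hd',
    leadingCoeff_linear hd', ascPochhammer_natDegree, (monic_ascPochhammer ℚ K).leadingCoeff]
  simp

theorem natDegree_and_leadingCoeff_sum_eq {R α : Type*} [Semiring R] (s : Finset α)
    (p : α → R[X]) (K : ℕ) (c : R) (hp : ∀ a ∈ s, (p a).natDegree = K ∧ (p a).leadingCoeff = c)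
    (hc : #s • c ≠ 0) :
    (∑ a ∈ s, p a).natDegree = K ∧ (∑ a ∈ s, p a).leadingCoeff = #s • c := by
  have hcoeff : (∑ a ∈ s, p a).coeff K = #s • c := by
    rw [finsetSum_coeff, ← sum_const]
    exact sum_congr rfl fun a ha => (hp a ha).1 ▸ (hp a ha).2
  have hdeg : (∑ a ∈ s, p a).natDegree = K :=
    (natDegree_sum_le_of_forall_le s p fun a ha => (hp a ha).1.le).antisymm
      (le_natDegree_of_ne_zero (hcoeff ▸ hc))
  exact ⟨hdeg, by rw [leadingCoeff, hdeg, hcoeff]⟩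

theorem eq_of_eval_natCast_add_mul_eq {R : Type*} [CommRing R] [IsDomain R] [CharZero R]
    {p q : R[X]} (a b : ℕ) (hb : b ≠ 0)
    (h : ∀ m : ℕ, p.eval ((a + b * m : ℕ) : R) = q.eval ((a + b * m : ℕ) : R)) : p = q :=
  eq_of_infinite_eval_eq p q <| Set.infinite_of_injective_forall_mem
    (Nat.cast_injective.comp fun m m' hm => by simpa [hb] using hm) h

theorem exists_int_sum_mul_eq_one_of_gcd_eq_one {ι : Type*} [Fintype ι] {w : ι → ℕ}
    (hgcd : univ.gcd w = 1) : ∃ c : ι → ℤ, ∑ i, c i * w i = 1 := by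
  set I : Ideal ℤ := Ideal.span (Set.range fun i => (w i : ℤ))
  obtain ⟨g, hg⟩ : ∃ g : ℤ, I = Ideal.span {g} :=
    ⟨_, (Submodule.IsPrincipal.span_singleton_generator I).symm⟩
  have hdvd : ∀ i, g ∣ w i := fun i =>
    Ideal.mem_span_singleton.mp (hg ▸ Ideal.subset_span ⟨i, rfl⟩)
  have hunit : g.natAbs = 1 := Nat.dvd_one.mp <| hgcd ▸
    Finset.dvd_gcd fun i _ => Int.natAbs_dvd_natAbs.mpr (hdvd i)
  have hone : (1 : ℤ) ∈ I := by
    rw [hg, Ideal.span_singleton_eq_top.mpr (Int.isUnit_iff_natAbs_eq.mpr hunit)]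
    exact Submodule.mem_top
  simpa using (Submodule.mem_span_range_iff_exists_fun ℤ).mp hone

theorem nonempty_of_gcd_eq_one {ι : Type*} [Fintype ι] {w : ι → ℕ} (hgcd : univ.gcd w = 1) :
    Nonempty ι := by
  by_contra h
  simp [not_nonempty_iff.mp h] at hgcd

theorem Nat.card_sum_eq_multichoose (ι : Type*) [Fintype ι] (M : ℕ) :
    Nat.card {c : ι → ℕ // ∑ i, c i = M} = (Fintype.card ι).multichoose M := by
  classical
  rw [← Nat.card_congr (Sym.equivNatSumOfFintype ι M), Nat.card_eq_fintype_card,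
    Sym.card_sym_eq_multichoose]

theorem card_add_mul_sum_eq_multichoose {ι : Type*} [Fintype ι] {d : ℕ} (s M : ℕ) (hd : d ≠ 0) :
    Nat.card {c : ι → ℕ // s + d * ∑ i, c i = s + d * M} = (Fintype.card ι).multichoose M := by
  rw [← Nat.card_sum_eq_multichoose]
  exact Nat.card_congr (Equiv.subtypeEquivRight fun c => by simp [hd])

theorem finite_sum_mul_eq {ι : Type*} [Fintype ι] {w : ι → ℕ} (hw : ∀ i, w i ≠ 0) (n : ℕ) :
    Finite {a : ι → ℕ // ∑ i, a i * w i = n} := by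
  classical
  refine Set.Finite.to_subtype ((Set.finite_Iic fun _ => n).subset fun a ha i => ?_)
  calc a i ≤ a i * w i := Nat.le_mul_of_pos_right _ (Nat.pos_of_ne_zero (hw i))
    _ ≤ ∑ j, a j * w j :=
      single_le_sum (f := fun j => a j * w j) (fun j _ => Nat.zero_le _) (mem_univ i)
    _ = n := ha

theorem natCast_mod_mul_eq {a b d : ℕ} (h : a * b = d) (x : ℕ) :
    ((x % a * b : ℕ) : ZMod d) = (x * b : ℕ) := by
  subst h
  exact (ZMod.natCast_eq_natCast_iff _ _ _).mpr ((Nat.mod_modEq x a).mul_right' b)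

section Residues

variable {ι : Type*} [Fintype ι] (w : ι → ℕ) {e : ι → ℕ} {d : ℕ}

def weightedVal (r : ∀ i, ZMod (e i)) : ℕ := ∑ i, (r i).val * w i

theorem sum_val_add_mul_mul_eq (hew : ∀ i, e i * w i = d) (r : ∀ i, ZMod (e i)) (c : ι → ℕ) :
    ∑ i, ((r i).val + e i * c i) * w i = weightedVal w r + d * ∑ i, c i := by
  rw [weightedVal, mul_sum, ← sum_add_distrib]
  refine sum_congr rfl fun i _ => ?_
  rw [← hew i]
  ring

variable [∀ i, NeZero (e i)]

theorem weightedVal_le (hew : ∀ i, e i * w i = d) (r : ∀ i, ZMod (e i)) :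
    weightedVal w r ≤ Fintype.card ι * d := by
  rw [← smul_eq_mul, ← card_univ, ← sum_const]
  exact sum_le_sum fun i _ => hew i ▸ Nat.mul_le_mul_right _ (ZMod.val_lt (r i)).le

def weightedValHom (hew : ∀ i, e i * w i = d) : (∀ i, ZMod (e i)) →+ ZMod d :=
  AddMonoidHom.mk' (fun r => (weightedVal w r : ZMod d)) fun r r' => by
    simp only [weightedVal, ← sum_add_distrib, Nat.cast_sum]
    refine sum_congr rfl fun i _ => ?_
    rw [Pi.add_apply, ZMod.val_add, natCast_mod_mul_eq (hew i)]
    push_cast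
    ring

theorem weightedValHom_surjective [DecidableEq ι] (hew : ∀ i, e i * w i = d)
    (hgcd : univ.gcd w = 1) : Function.Surjective (weightedValHom w hew) := by
  obtain ⟨c, hc⟩ := exists_int_sum_mul_eq_one_of_gcd_eq_one hgcd
  have hsingle : ∀ i, weightedValHom w hew (Pi.single i 1) = w i := by
    intro i
    rw [weightedValHom, AddMonoidHom.mk'_apply, weightedVal,
      sum_eq_single i (fun j _ hj => by simp [hj]) (by simp), Pi.single_eq_same,
      ZMod.val_one_eq_one_mod, natCast_mod_mul_eq (hew i), one_mul]
  have hone : (1 : ZMod d) ∈ (weightedValHom w hew).range := by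
    have hmem : ∀ i, (w i : ZMod d) ∈ (weightedValHom w hew).range := fun i =>
      ⟨Pi.single i 1, hsingle i⟩
    rw [← Int.cast_one, ← hc, Int.cast_sum]
    exact sum_mem fun i _ => by simpa [zsmul_eq_mul] using zsmul_mem (hmem i) (c i)
  intro y
  obtain ⟨z, rfl⟩ := ZMod.intCast_surjective y
  simpa using zsmul_mem hone z

theorem card_weightedVal_fiber_mul [DecidableEq ι] [NeZero d] (hew : ∀ i, e i * w i = d)
    (hgcd : univ.gcd w = 1) (y : ZMod d) :
    #{r : ∀ i, ZMod (e i) | (weightedVal w r : ZMod d) = y} * d = ∏ i, e i := by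
  set φ := weightedValHom w hew
  have hfib : ∀ y', #{r | φ r = y'} = #{r | φ r = y} := fun y' =>
    AddMonoidHom.card_fiber_eq_of_mem_range φ (weightedValHom_surjective w hew hgcd y')
      (weightedValHom_surjective w hew hgcd y)
  have hsum := card_eq_sum_card_fiberwise (f := φ) (s := univ) (t := univ)
    fun _ _ => mem_coe.2 (mem_univ _)
  rw [sum_congr rfl fun y' _ => hfib y', sum_const, card_univ, card_univ, ZMod.card,
    Fintype.card_pi] at hsum
  simp only [ZMod.card] at hsum
  rw [hsum, smul_eq_mul, mul_comm]
  rfl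

theorem card_sum_mul_eq_sum_card [DecidableEq ι] [NeZero d] (hew : ∀ i, e i * w i = d) (n : ℕ) :
    Nat.card {a : ι → ℕ // ∑ i, a i * w i = n} =
      ∑ r : ∀ i, ZMod (e i), Nat.card {c : ι → ℕ // weightedVal w r + d * ∑ i, c i = n} := by
  have hw : ∀ i, w i ≠ 0 := fun i hi => NeZero.ne d (by rw [← hew i, hi, mul_zero])
  have := finite_sum_mul_eq hw n
  let π : {a : ι → ℕ // ∑ i, a i * w i = n} → ∀ i, ZMod (e i) := fun a i => a.1 i
  rw [← Nat.card_congr (Equiv.sigmaFiberEquiv π), Nat.card_sigma]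
  refine sum_congr rfl fun r _ => Nat.card_congr ?_
  have hval : ∀ a : {a // π a = r}, ∀ i, (r i).val = a.1.1 i % e i := fun a i => by
    rw [← congrFun a.2 i, ZMod.val_natCast]
  exact
    { toFun a := ⟨fun i => a.1.1 i / e i, by
        rw [← sum_val_add_mul_mul_eq w hew]
        simpa only [hval a, Nat.mod_add_div] using a.1.2⟩
      invFun c := ⟨⟨fun i => (r i).val + e i * c.1 i, by rw [sum_val_add_mul_mul_eq w hew, c.2]⟩,
        funext fun i => by simp [π]⟩
      left_inv a := by
        ext i
        simp only [hval a, Nat.mod_add_div]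
      right_inv c := by
        ext i
        simp [Nat.add_mul_div_left _ _ (Nat.pos_of_neZero (e i)),
          Nat.div_eq_of_lt (ZMod.val_lt (r i))] }

end Residues

noncomputable def hilbQuasiPoly {ι : Type*} [Fintype ι] [DecidableEq ι] (w e : ι → ℕ)
    [∀ i, NeZero (e i)] (d : ℕ) (y : ZMod d) : ℚ[X] :=
  ∑ r ∈ {r : ∀ i, ZMod (e i) | (weightedVal w r : ZMod d) = y},
    shiftedBinomPoly (Fintype.card ι - 1) d (weightedVal w r)

section HilbQuasiPoly

variable {ι : Type*} [Fintype ι] [DecidableEq ι] (w : ι → ℕ) {e : ι → ℕ} [∀ i, NeZero (e i)]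
  {d : ℕ} [NeZero d] (hew : ∀ i, e i * w i = d)
include hew

theorem card_sum_mul_eq_eval_hilbQuasiPoly [Nonempty ι] (n : ℕ) (hn : Fintype.card ι * d ≤ n) :
    (Nat.card {a : ι → ℕ // ∑ i, a i * w i = n} : ℚ) = (hilbQuasiPoly w e d n).eval (n : ℚ) := by
  rw [card_sum_mul_eq_sum_card w hew, Nat.cast_sum, hilbQuasiPoly, eval_finsetSum, sum_filter]
  refine sum_congr rfl fun r _ => ?_
  split_ifs with hr
  · obtain ⟨M, rfl⟩ : ∃ M, n = weightedVal w r + d * M := by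
      have hle := (weightedVal_le w hew r).trans hn
      obtain ⟨M, hM⟩ := (Nat.modEq_iff_dvd' hle).mp ((ZMod.natCast_eq_natCast_iff _ _ _).mp hr)
      exact ⟨M, by omega⟩
    rw [card_add_mul_sum_eq_multichoose _ _ (NeZero.ne d), eval_shiftedBinomPoly _ _ _ _ (NeZero.ne d),
      Nat.multichoose_eq]
    have := Fintype.card_pos (α := ι)
    rw [show Fintype.card ι + M - 1 = M + (Fintype.card ι - 1) by omega, Nat.choose_symm_add]
  · rw [Nat.cast_eq_zero, Nat.card_eq_zero]
    refine Or.inl ⟨fun c => hr ?_⟩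
    rw [← c.2]
    simp

theorem natDegree_and_leadingCoeff_hilbQuasiPoly (hgcd : univ.gcd w = 1) (y : ZMod d) :
    (hilbQuasiPoly w e d y).natDegree = Fintype.card ι - 1 ∧
      (hilbQuasiPoly w e d y).leadingCoeff =
        1 / ((Fintype.card ι - 1).factorial * ∏ i, (w i : ℚ)) := by
  have := nonempty_of_gcd_eq_one hgcd
  obtain ⟨K, hK⟩ : ∃ K, Fintype.card ι = K + 1 :=
    ⟨_, (Nat.succ_pred_eq_of_pos Fintype.card_pos).symm⟩
  have hF : (#{r : ∀ i, ZMod (e i) | (weightedVal w r : ZMod d) = y} : ℚ) * d =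
      ∏ i, (e i : ℚ) := by
    exact_mod_cast card_weightedVal_fiber_mul w hew hgcd y
  have hprod : (∏ i, (e i : ℚ)) * ∏ i, (w i : ℚ) = d ^ (K + 1) := by
    rw [← prod_mul_distrib]
    norm_cast
    simp [hew, hK]
  have hd : (d : ℚ) ≠ 0 := by simpa using NeZero.ne d
  have hw : ∏ i, (w i : ℚ) ≠ 0 := right_ne_zero_of_mul (hprod ▸ pow_ne_zero _ hd)
  have hlc : (#{r : ∀ i, ZMod (e i) | (weightedVal w r : ZMod d) = y} : ℚ) *
      ((K.factorial : ℚ)⁻¹ * ((d : ℚ)⁻¹) ^ K) = 1 / (K.factorial * ∏ i, (w i : ℚ)) := by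
    have hcard : (#{r : ∀ i, ZMod (e i) | (weightedVal w r : ZMod d) = y} : ℚ) *
        ∏ i, (w i : ℚ) = d ^ K :=
      mul_right_cancel₀ hd (by linear_combination (∏ i, (w i : ℚ)) * hF + hprod)
    field_simp
    rw [mul_right_comm, hcard, one_div_pow, mul_one_div_cancel (pow_ne_zero _ hd)]
  simp only [hilbQuasiPoly, hK, Nat.add_sub_cancel]
  rw [← hlc, ← nsmul_eq_mul]
  refine natDegree_and_leadingCoeff_sum_eq _ _ K _
    (fun r _ => natDegree_and_leadingCoeff_shiftedBinomPoly K d _ (NeZero.ne d)) ?_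
  rw [nsmul_eq_mul, hlc]
  simp [hw, K.factorial_ne_zero]

theorem eq_hilbQuasiPoly_of_eventually_eq [Nonempty ι] (P : ZMod d → ℚ[X])
    (hP : ∃ N : ℕ, ∀ n : ℕ, N ≤ n →
      (P n).eval (n : ℚ) = Nat.card {a : ι → ℕ // ∑ i, a i * w i = n})
    (y : ZMod d) : P y = hilbQuasiPoly w e d y := by
  obtain ⟨N, hN⟩ := hP
  have hd := NeZero.pos d
  refine eq_of_eval_natCast_add_mul_eq (y.val + d * (N + Fintype.card ι)) d (NeZero.ne d)
    fun m => ?_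
  have heval : ∀ n : ℕ, N + Fintype.card ι * d ≤ n → (n : ZMod d) = y →
      (P y).eval (n : ℚ) = (hilbQuasiPoly w e d y).eval (n : ℚ) := by
    rintro n hn rfl
    rw [hN n (by omega), card_sum_mul_eq_eval_hilbQuasiPoly w hew n (by omega)]
  exact heval _ (by nlinarith) (by simp)

end HilbQuasiPoly

theorem stmt7 (k : ℕ) (w : Fin k → ℕ) (hw : ∀ i, 0 < w i)
    (hgcd : Finset.univ.gcd w = 1)
    (P : ZMod (Finset.univ.lcm w) → Polynomial ℚ)
    (hP : ∃ N : ℕ, ∀ n : ℕ, N ≤ n →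
      (P (n : ZMod (Finset.univ.lcm w))).eval (n : ℚ) = hilbFn k w n)
    (i : ZMod (Finset.univ.lcm w)) :
    (P i).natDegree = k - 1 ∧
      (P i).leadingCoeff = 1 / ((k - 1).factorial * ∏ j, (w j : ℚ)) := by
  have hwd : ∀ j, w j ∣ univ.lcm w := fun j => dvd_lcm (mem_univ j)
  have : NeZero (univ.lcm w) := ⟨lcm_ne_zero_iff.mpr fun j _ => (hw j).ne'⟩
  have : ∀ j, NeZero (univ.lcm w / w j) := fun j =>
    ⟨(Nat.div_pos (Nat.le_of_dvd (NeZero.pos _) (hwd j)) (hw j)).ne'⟩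
  have hew : ∀ j, univ.lcm w / w j * w j = univ.lcm w := fun j => Nat.div_mul_cancel (hwd j)
  have := nonempty_of_gcd_eq_one hgcd
  rw [eq_hilbQuasiPoly_of_eventually_eq w hew P hP i]
  simpa only [Fintype.card_fin] using natDegree_and_leadingCoeff_hilbQuasiPoly w hew hgcd i
end

section
/- Let R = K[x_1,...,x_k] with k ≥ 1 be graded by W = [d_1,...,d_k], and let I be a nonzero W-homogeneous ideal of R. Then every polynomial P_i of the Hilbert quasi-polynomial of R/I has degree at most k−2. -/
/-!
Pick a nonzero `W`-homogeneous `g ∈ I`, of degree `e`, and a variable `x_z`. Multiplication by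
`g ^ w z`, which has the degree of `x_z ^ e`, embeds `R_(n - e w_z)` into `I_n`, so
`H(n) ≤ dim R_n - dim R_(n - e w_z)`, the number of monomials of degree `n` whose `x_z`-exponent
is below `e`. Such a monomial is determined by that exponent and by its exponents at the variables
other than `x_z` and one more `x_y` (all at most `n`), because the degree fixes the
`x_y`-exponent: hence `H(n) ≤ e (n + 1) ^ (k - 2)`, and for `k = 1` there are no such monomials
once `n ≥ e w_z`. On the infinite residue class of `i` the polynomial `P i` agrees with `H`, so
it has degree at most `k - 2`, or vanishes when `k = 1`.
-/

/-- The Hilbert function of `(K[x_1,…,x_k]/I, W)`: the `K`-dimension of the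
`n`-th graded component of the quotient, realized as the image in `R/I` of the
space of `W`-homogeneous polynomials of weighted degree `n`. -/
noncomputable def quotHilbFn (k : ℕ) (K : Type) [Field K] (w : Fin k → ℕ)
    (I : Ideal (MvPolynomial (Fin k) K)) (n : ℕ) : ℕ :=
  Module.finrank K ((MvPolynomial.weightedHomogeneousSubmodule K w n).map
    (Ideal.Quotient.mkₐ K I).toLinearMap)

open Filter Polynomial MvPolynomial Module Finsupp

namespace Polynomial

theorem eq_zero_of_frequently_eval_natCast_eq_zero {R : Type*} [CommRing R] [IsDomain R]
    [CharZero R] {p : R[X]} (h : ∃ᶠ n : ℕ in atTop, p.eval (n : R) = 0) : p = 0 := by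
  refine p.eq_zero_of_infinite_isRoot ((Nat.frequently_atTop_iff_infinite.1 h).image
    Nat.cast_injective.injOn |>.mono ?_)
  rintro _ ⟨n, hn, rfl⟩
  exact hn

variable {𝕜 : Type*} [NormedField 𝕜] [LinearOrder 𝕜] [IsStrictOrderedRing 𝕜]
  [OrderTopology 𝕜]

theorem degree_le_of_frequently_abs_eval_le {p : 𝕜[X]} {m : ℕ} {c : 𝕜}
    (h : ∃ᶠ x in atTop, |p.eval x| ≤ c * (x + 1) ^ m) : p.degree ≤ m := by
  by_contra! hdeg
  have hQ : ((X + C 1) ^ m : 𝕜[X]).degree = m := by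
    rw [degree_pow, degree_X_add_C, nsmul_one]
  have hgrowth := p.abs_div_tendsto_atTop_atTop_of_degree_gt _ (hQ ▸ hdeg)
    (pow_ne_zero _ (X_add_C_ne_zero 1))
  refine h ?_
  filter_upwards [hgrowth.eventually_gt_atTop c, eventually_gt_atTop (-1)] with x hx hx1
  have hpos : 0 < (x + 1) ^ m := pow_pos (by linarith) m
  simp only [eval_pow, eval_add, eval_X, eval_C, abs_div, abs_of_pos hpos] at hx
  exact not_le.2 ((lt_div_iff₀ hpos).1 hx)

end Polynomial

theorem ZMod.frequently_natCast_eq {L : ℕ} [NeZero L] (i : ZMod L) :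
    ∃ᶠ n : ℕ in atTop, (n : ZMod L) = i :=
  (Nat.frequently_modEq (NeZero.ne L) i.val).mono fun n hn => by
    rw [(ZMod.natCast_eq_natCast_iff _ _ _).2 hn, ZMod.natCast_zmod_val]

namespace Finsupp

variable {σ : Type*} {w : σ → ℕ}

theorem eq_of_weight_eq_of_forall_ne {y : σ} (hy : w y ≠ 0) {d d' : σ →₀ ℕ}
    (h : weight w d = weight w d') (hne : ∀ j ≠ y, d j = d' j) : d = d' := by
  have herase : d.erase y = d'.erase y := by
    ext j
    by_cases hj : j = y
    · simp [hj]
    · simp [Finsupp.erase_ne hj, hne j hj]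
  have hsplit : ∀ f : σ →₀ ℕ, weight w f = weight w (f.erase y) + f y * w y := fun f => by
    conv_lhs => rw [← Finsupp.erase_add_single y f]
    rw [map_add, weight_single, smul_eq_mul]
  have hy' : d y = d' y := by
    rw [hsplit d, hsplit d', herase] at h
    exact Nat.eq_of_mul_eq_mul_right (Nat.pos_of_ne_zero hy) (by omega)
  ext j
  by_cases hj : j = y
  · rw [hj, hy']
  · exact hne j hj

theorem finite_setOf_weight_eq [Finite σ] (hw : ∀ i, w i ≠ 0) (n : ℕ) :
    {d : σ →₀ ℕ | weight w d = n}.Finite :=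
  (finite_of_nat_weight_le w hw n).subset fun _ hd => le_of_eq hd

theorem ncard_setOf_weight_eq_le [Finite σ] (hw : ∀ i, w i ≠ 0) (z : σ) (e n : ℕ) :
    {d : σ →₀ ℕ | weight w d = n}.ncard ≤
      {d : σ →₀ ℕ | weight w d = n - e * w z}.ncard +
        {d : σ →₀ ℕ | weight w d = n ∧ d z < e}.ncard := by
  have hcover : {d : σ →₀ ℕ | weight w d = n} ⊆
      (· + single z e) '' {d | weight w d = n - e * w z} ∪
        {d | weight w d = n ∧ d z < e} := by
    intro d (hd : weight w d = n)
    by_cases hz : d z < e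
    · exact Or.inr ⟨hd, hz⟩
    · have hsum : d - single z e + single z e = d :=
        tsub_add_cancel_of_le (single_le_iff.2 (not_lt.1 hz))
      refine Or.inl ⟨d - single z e, ?_, hsum⟩
      have := congrArg (weight w) hsum
      rw [map_add, weight_single, smul_eq_mul] at this
      show weight w _ = _
      omega
  have hfin := finite_setOf_weight_eq hw (n - e * w z)
  calc {d : σ →₀ ℕ | weight w d = n}.ncard
      ≤ ((· + single z e) '' {d | weight w d = n - e * w z}).ncard +
          {d : σ →₀ ℕ | weight w d = n ∧ d z < e}.ncard :=
        (Set.ncard_le_ncard hcover ((hfin.image _).union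
          ((finite_setOf_weight_eq hw n).subset fun _ hd => hd.1))).trans
          (Set.ncard_union_le _ _)
    _ ≤ _ := Nat.add_le_add_right (Set.ncard_image_le hfin) _

theorem ncard_setOf_weight_eq_and_lt_le [Fintype σ] (hw : ∀ i, w i ≠ 0) {y z : σ}
    (hyz : y ≠ z) (e n : ℕ) :
    {d : σ →₀ ℕ | weight w d = n ∧ d z < e}.ncard ≤
      e * (n + 1) ^ (Fintype.card σ - 2) := by
  classical
  let ψ : {d : σ →₀ ℕ | weight w d = n ∧ d z < e} →
      Fin e × ({j // j ≠ z ∧ j ≠ y} → Fin (n + 1)) := fun d =>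
    (⟨d.1 z, d.2.2⟩,
      fun j => ⟨d.1 j, Nat.lt_succ_of_le ((le_weight w (hw j) d.1).trans_eq d.2.1)⟩)
  have hψ : Function.Injective ψ := by
    intro d d' h
    refine Subtype.ext <|
      eq_of_weight_eq_of_forall_ne (hw y) (d.2.1.trans d'.2.1.symm) fun j hj => ?_
    by_cases hjz : j = z
    · subst hjz; exact congrArg (fun u => (u.1 : ℕ)) h
    · exact congrArg (fun u => (u.2 ⟨j, hjz, hj⟩ : ℕ)) h
  have hcard : Fintype.card {j // j ≠ z ∧ j ≠ y} = Fintype.card σ - 2 := by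
    rw [Fintype.card_subtype, show Finset.univ.filter (fun j => j ≠ z ∧ j ≠ y) =
        (Finset.univ.erase z).erase y by ext; simp [and_comm],
      Finset.card_erase_of_mem (by simpa using hyz), Finset.card_erase_of_mem (Finset.mem_univ _),
      Finset.card_univ]
    omega
  calc _ = Nat.card {d : σ →₀ ℕ | weight w d = n ∧ d z < e} := (Nat.card_coe_set_eq _).symm
    _ ≤ Nat.card (Fin e × ({j // j ≠ z ∧ j ≠ y} → Fin (n + 1))) :=
      Nat.card_le_card_of_injective ψ hψ
    _ = _ := by simp [Nat.card_eq_fintype_card, hcard]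

theorem setOf_weight_eq_and_lt_eq_empty [Subsingleton σ] (hw : ∀ i, w i ≠ 0) {z : σ}
    {e n : ℕ} (hn : e * w z ≤ n) : {d : σ →₀ ℕ | weight w d = n ∧ d z < e} = ∅ := by
  refine Set.eq_empty_of_forall_notMem fun d ⟨hd, hdz⟩ => ?_
  have : d = single z (d z) := by
    ext j
    rw [Subsingleton.elim j z, single_eq_same]
  rw [this, weight_single, smul_eq_mul] at hd
  have := Nat.mul_lt_mul_of_pos_right hdz (Nat.pos_of_ne_zero (hw z))
  omega

end Finsupp

namespace MvPolynomial

variable {σ K : Type*} [Field K] {w : σ → ℕ}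

theorem finrank_weightedHomogeneousSubmodule (n : ℕ) :
    finrank K (weightedHomogeneousSubmodule K w n) =
      {d : σ →₀ ℕ | weight w d = n}.ncard := by
  rw [weightedHomogeneousSubmodule_eq_finsupp_supported, ← Nat.card_coe_set_eq]
  exact finrank_eq_nat_card_basis (basisRestrictSupport K _)

theorem finiteDimensional_weightedHomogeneousSubmodule [Finite σ] (hw : ∀ i, w i ≠ 0)
    (n : ℕ) :
    FiniteDimensional K (weightedHomogeneousSubmodule K w n) := by
  rw [weightedHomogeneousSubmodule_eq_finsupp_supported]
  have := (finite_setOf_weight_eq hw n).to_subtype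
  exact Module.Finite.of_basis (basisRestrictSupport K _)

theorem exists_isWeightedHomogeneous_mem_ne_zero {I : Ideal (MvPolynomial σ K)} (hI : I ≠ ⊥)
    (hIhom : ∀ f ∈ I, ∀ n : ℕ, weightedHomogeneousComponent w n f ∈ I) :
    ∃ g ∈ I, g ≠ 0 ∧ ∃ e, IsWeightedHomogeneous w g e := by
  classical
  obtain ⟨f, hfI, hf0⟩ := Submodule.exists_mem_ne_zero_of_ne_bot hI
  obtain ⟨d, hd⟩ := ne_zero_iff.1 hf0
  refine ⟨_, hIhom f hfI (weight w d), fun h => ?_, _,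
    weightedHomogeneousComponent_isWeightedHomogeneous _ _⟩
  have := congrArg (coeff d) h
  rw [coeff_weightedHomogeneousComponent, if_pos rfl, coeff_zero] at this
  exact hd this

end MvPolynomial

variable {k : ℕ} {K : Type} [Field K] {w : Fin k → ℕ} {I : Ideal (MvPolynomial (Fin k) K)}

theorem quotHilbFn_add_finrank_le {g : MvPolynomial (Fin k) K} {a n : ℕ} (hgI : g ∈ I)
    (hg0 : g ≠ 0) (hg : IsWeightedHomogeneous w g a) (hn : a ≤ n)
    [FiniteDimensional K (weightedHomogeneousSubmodule K w n)] :
    quotHilbFn k K w I n + finrank K (weightedHomogeneousSubmodule K w (n - a)) ≤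
      finrank K (weightedHomogeneousSubmodule K w n) := by
  set S := weightedHomogeneousSubmodule K w n
  set π := (Ideal.Quotient.mkₐ K I).toLinearMap ∘ₗ S.subtype
  set T := (weightedHomogeneousSubmodule K w (n - a)).map (LinearMap.mulLeft K g)
  have hTS : T ≤ S := by
    rintro _ ⟨x, hx, rfl⟩
    have := hg.mul hx
    rwa [Nat.add_sub_cancel' hn] at this
  have hT : finrank K T = finrank K (weightedHomogeneousSubmodule K w (n - a)) :=
    (Submodule.equivMapOfInjective _ (mul_right_injective₀ hg0) _).finrank_eq.symm
  have hker : T.comap S.subtype ≤ LinearMap.ker π := by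
    rintro x ⟨y, -, hy⟩
    simp only [π, LinearMap.mem_ker, LinearMap.comp_apply, ← hy]
    exact Ideal.Quotient.eq_zero_iff_mem.2 (I.mul_mem_right y hgI)
  have hrank := π.finrank_range_add_finrank_ker
  rw [LinearMap.range_comp, Submodule.range_subtype] at hrank
  have hTker := Submodule.finrank_mono hker
  rw [(Submodule.comapSubtypeEquivOfLe hTS).finrank_eq] at hTker
  change finrank K (S.map _) + _ ≤ _
  omega

theorem quotHilbFn_le_ncard (hw : ∀ i, w i ≠ 0) {g : MvPolynomial (Fin k) K} {e n : ℕ}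
    (hgI : g ∈ I) (hg0 : g ≠ 0) (hg : IsWeightedHomogeneous w g e) (z : Fin k)
    (hn : e * w z ≤ n) :
    quotHilbFn k K w I n ≤ {d : Fin k →₀ ℕ | weight w d = n ∧ d z < e}.ncard := by
  have := finiteDimensional_weightedHomogeneousSubmodule (K := K) hw n
  have hpow : IsWeightedHomogeneous w (g ^ w z) (e * w z) := by
    simpa [smul_eq_mul, mul_comm] using hg.pow (w z)
  have hdim := quotHilbFn_add_finrank_le (I.pow_mem_of_mem hgI _ (Nat.pos_of_ne_zero (hw z)))
    (pow_ne_zero _ hg0) hpow hn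
  rw [finrank_weightedHomogeneousSubmodule, finrank_weightedHomogeneousSubmodule] at hdim
  have := ncard_setOf_weight_eq_le hw z e n
  omega

theorem stmt8_general (k : ℕ) (hk : 1 ≤ k) (K : Type) [Field K]
    (w : Fin k → ℕ) (hw : ∀ i, 0 < w i)
    (I : Ideal (MvPolynomial (Fin k) K)) (hI0 : I ≠ ⊥)
    (hIhom : ∀ f ∈ I, ∀ n : ℕ, MvPolynomial.weightedHomogeneousComponent w n f ∈ I)
    (P : ZMod (Finset.univ.lcm w) → Polynomial ℚ)
    (hP : ∃ N : ℕ, ∀ n : ℕ, N ≤ n →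
      (P (n : ZMod (Finset.univ.lcm w))).eval (n : ℚ) = quotHilbFn k K w I n)
    (i : ZMod (Finset.univ.lcm w)) :
    (P i).degree < ((k - 1 : ℕ) : WithBot ℕ) := by
  have hw' : ∀ j, w j ≠ 0 := fun j => (hw j).ne'
  obtain ⟨N, hN⟩ := hP
  obtain ⟨g, hgI, hg0, e, hg⟩ := exists_isWeightedHomogeneous_mem_ne_zero hI0 hIhom
  let z : Fin k := ⟨0, hk⟩
  have : NeZero (Finset.univ.lcm w) := ⟨by simpa [Finset.lcm_eq_zero_iff] using hw'⟩
  have hfreq : ∃ᶠ n : ℕ in atTop, (P i).eval (n : ℚ) = quotHilbFn k K w I n ∧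
      quotHilbFn k K w I n ≤ {d : Fin k →₀ ℕ | weight w d = n ∧ d z < e}.ncard ∧
      e * w z ≤ n :=
    ((ZMod.frequently_natCast_eq i).and_eventually
      (eventually_ge_atTop (max N (e * w z)))).mono fun n ⟨hni, hn⟩ =>
        ⟨hni ▸ hN n (le_of_max_le_left hn),
          quotHilbFn_le_ncard hw' hgI hg0 hg z (le_of_max_le_right hn), le_of_max_le_right hn⟩
  rcases Nat.lt_or_ge 1 k with hk2 | hk1
  · have hdeg : (P i).degree ≤ ((k - 2 : ℕ) : WithBot ℕ) := by
      refine degree_le_of_frequently_abs_eval_le (c := (e : ℚ))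
        (tendsto_natCast_atTop_atTop.frequently (hfreq.mono fun n ⟨hPn, hHn, _⟩ => ?_))
      have hB := ncard_setOf_weight_eq_and_lt_le hw' (y := ⟨1, hk2⟩) (z := z)
        (by simp [Fin.ext_iff]) e n
      rw [Fintype.card_fin] at hB
      rw [hPn, Nat.abs_cast]
      exact_mod_cast hHn.trans hB
    exact hdeg.trans_lt (by exact_mod_cast (by omega : k - 2 < k - 1))
  · have : Subsingleton (Fin k) := Fin.subsingleton_iff_le_one.2 hk1
    have hPi : P i = 0 := eq_zero_of_frequently_eval_natCast_eq_zero
      (hfreq.mono fun n ⟨hPn, hHn, hn⟩ => by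
        rw [setOf_weight_eq_and_lt_eq_empty hw' hn, Set.ncard_empty, Nat.le_zero] at hHn
        rw [hPn, hHn, Nat.cast_zero])
    rw [hPi, degree_zero]
    exact WithBot.bot_lt_coe _

theorem stmt8 (k : ℕ) (hk : 1 ≤ k) (K : Type) [Field K]
    (w : Fin k → ℕ) (hw : ∀ i, 0 < w i) (hgcd : Finset.univ.gcd w = 1)
    (I : Ideal (MvPolynomial (Fin k) K)) (hI0 : I ≠ ⊥)
    (hIhom : ∀ f ∈ I, ∀ n : ℕ, MvPolynomial.weightedHomogeneousComponent w n f ∈ I)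
    (P : ZMod (Finset.univ.lcm w) → Polynomial ℚ)
    (hP : ∃ N : ℕ, ∀ n : ℕ, N ≤ n →
      (P (n : ZMod (Finset.univ.lcm w))).eval (n : ℚ) = quotHilbFn k K w I n)
    (i : ZMod (Finset.univ.lcm w)) :
    (P i).degree < ((k - 1 : ℕ) : WithBot ℕ) :=
  stmt8_general k hk K w hw I hI0 hIhom P hP i
end

section
/- Let R = K[x_1,...,x_k] be graded by W = [d_1,...,d_k] with gcd 1, d = lcm(d_i), and δ = max{|I| : gcd(d_i)_{i∈I} ≠ 1}. Then the Hilbert quasi-polynomial satisfies P_R^W(x) = Q(x) + T(x), where Q ∈ ℚ[x] is a single polynomial of degree k−1 (independent of the residue class mod d) and T is a quasi-polynomial of degree at most δ−1. In particular, for each r with δ ≤ r ≤ k−1, the coefficient of x^r in P_i is the same for all i = 0,...,d−1. -/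
/-!
The Hilbert function `h` is annihilated by `∏ i, (S ^ w i - 1)`, `S` the shift of sequences.
Over `ℚ` this polynomial factors as `(X - 1) ^ k` times a product of cyclotomic polynomials
`Φ_e`, `e ≠ 1`; these two factors are coprime, so `h = u + v` with `(S - 1) ^ k u = 0` and `v`
killed by the cyclotomic cofactor. Then `u` is a polynomial `Q` of degree `< k`. Each `Φ_e`
occurs in the cofactor once for every `i` with `e ∣ w i`, i.e. at most `δ` times, so the
cofactor divides `(X ^ d - 1) ^ δ` and `v` is a polynomial of degree `< δ` on each residue class
mod `d`. Finally `Q` has degree exactly `k - 1` because `h` grows like `n ^ (k - 1)`.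
-/

open Polynomial Finset Filter

section Shift

variable {R : Type*} [CommRing R]

def seqShift : Module.End R (ℕ → R) := LinearMap.funLeft R R (· + 1)

lemma seqShift_pow_apply (e : ℕ) (f : ℕ → R) (n : ℕ) : (seqShift ^ e) f n = f (n + e) := by
  induction e generalizing f n with
  | zero => rfl
  | succ e ih => rw [pow_succ, Module.End.mul_apply, ih]; rfl

lemma aeval_seqShift_X_pow_sub_one (D : ℕ) (f : ℕ → R) :
    aeval seqShift (X ^ D - 1 : R[X]) f = fwdDiff D f := by
  ext n
  simp [seqShift_pow_apply, fwdDiff]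

lemma aeval_seqShift_X_pow_sub_one_pow (D j : ℕ) (f : ℕ → R) :
    aeval seqShift ((X ^ D - 1 : R[X]) ^ j) f = (fwdDiff D)^[j] f := by
  induction j with
  | zero => simp
  | succ j ih =>
    rw [pow_succ', map_mul, Module.End.mul_apply, ih, aeval_seqShift_X_pow_sub_one,
      Function.iterate_succ_apply']

lemma aeval_seqShift_seqShift_pow_apply (p : R[X]) (e : ℕ) (f : ℕ → R) :
    aeval seqShift p ((seqShift ^ e) f) = (seqShift ^ e) (aeval seqShift p f) := by
  rw [← aeval_X_pow (R := R), ← Module.End.mul_apply, ← map_mul, mul_comm, map_mul,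
    Module.End.mul_apply]

lemma fwdDiff_iter_comp_arithProg (c D j : ℕ) (f : ℕ → R) (m : ℕ) :
    (fwdDiff 1)^[j] (fun m ↦ f (c + m * D)) m = (fwdDiff D)^[j] f (c + m * D) := by
  simp [fwdDiff_iter_eq_sum_shift, add_mul, add_assoc]

lemma fwdDiff_iter_eq_zero_of_le {D j i : ℕ} {f : ℕ → R} (hf : (fwdDiff D)^[j] f = 0)
    (hji : j ≤ i) :
    (fwdDiff D)^[i] f = 0 := by
  obtain ⟨l, rfl⟩ := Nat.exists_eq_add_of_le hji
  rw [add_comm, Function.iterate_add_apply, hf]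
  exact Function.iterate_fixed (fwdDiff_const D 0) l

end Shift

section Interpolation

variable {K : Type*} [Field K] [CharZero K]

lemma exists_polynomial_of_fwdDiff_iter_eq_zero {f : ℕ → K} {j : ℕ}
    (hf : (fwdDiff 1)^[j] f = 0) :
    ∃ q : K[X], q.degree < j ∧ ∀ n : ℕ, f n = q.eval (n : K) := by
  refine ⟨∑ i ∈ range j, ((fwdDiff 1)^[i] f 0 / i.factorial) • descPochhammer K i, ?_,
    fun n ↦ ?_⟩
  · refine (degree_sum_le _ _).trans_lt ((Finset.sup_lt_iff (WithBot.bot_lt_coe j)).2 ?_)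
    intro i hi
    refine (degree_smul_le _ _).trans_lt (degree_le_natDegree.trans_lt ?_)
    rw [descPochhammer_natDegree]
    exact Nat.cast_lt.2 (mem_range.1 hi)
  · have heval : ∀ i, (((fwdDiff 1)^[i] f 0 / i.factorial) • descPochhammer K i).eval (n : K) =
        n.choose i • (fwdDiff 1)^[i] f 0 := by
      intro i
      have : (i.factorial : K) ≠ 0 := Nat.cast_ne_zero.2 i.factorial_ne_zero
      rw [eval_smul, descPochhammer_eval_eq_descFactorial,
        Nat.descFactorial_eq_factorial_mul_choose, smul_eq_mul, nsmul_eq_mul]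
      push_cast
      field_simp
    have hvanish : ∀ i, j ≤ i ∨ n < i → n.choose i • (fwdDiff 1)^[i] f 0 = 0 := by
      rintro i (hi | hi)
      · simp [fwdDiff_iter_eq_zero_of_le hf hi]
      · simp [Nat.choose_eq_zero_of_lt hi]
    have hnewton := shift_eq_sum_fwdDiff_iter 1 f n 0
    rw [smul_eq_mul, mul_one, zero_add] at hnewton
    rw [eval_finsetSum, sum_congr rfl fun i _ ↦ heval i, hnewton,
      sum_subset (range_subset_range.2 (Nat.le_add_left (n + 1) j))
        fun i _ hi ↦ hvanish i (Or.inr (by simpa using hi)),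
      sum_subset (range_subset_range.2 (Nat.le_add_right j (n + 1)))
        fun i _ hi ↦ hvanish i (Or.inl (by simpa using hi))]

lemma exists_polynomial_on_arithProg_of_fwdDiff_iter_eq_zero {f : ℕ → K} {D j : ℕ}
    (hD : 0 < D) (hf : (fwdDiff D)^[j] f = 0) (c : ℕ) :
    ∃ q : K[X], q.degree < j ∧ ∀ m : ℕ, f (c + m * D) = q.eval ((c + m * D : ℕ) : K) := by
  have hg : (fwdDiff 1)^[j] (fun m ↦ f (c + m * D)) = 0 := by
    ext m
    rw [fwdDiff_iter_comp_arithProg, hf]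
    rfl
  obtain ⟨p, hp, hpf⟩ := exists_polynomial_of_fwdDiff_iter_eq_zero hg
  have hD' : (D : K) ≠ 0 := Nat.cast_ne_zero.2 hD.ne'
  refine ⟨p.comp (C (D : K)⁻¹ * (X - C (c : K))), ?_, fun m ↦ ?_⟩
  · rcases eq_or_ne p 0 with rfl | hp0
    · simp
    refine degree_le_natDegree.trans_lt ?_
    rw [natDegree_comp, natDegree_C_mul (inv_ne_zero hD'), natDegree_X_sub_C, mul_one]
    exact Nat.cast_lt.2 ((natDegree_lt_iff_degree_lt hp0).2 hp)
  · rw [hpf m, eval_comp]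
    congr 1
    simp only [eval_mul, eval_C, eval_sub, eval_X, Nat.cast_add, Nat.cast_mul]
    field_simp
    ring

lemma eq_of_forall_eval_add_mul_eq {p q : K[X]} {c D N : ℕ} (hD : 0 < D)
    (h : ∀ m, N ≤ m → p.eval ((c + m * D : ℕ) : K) = q.eval ((c + m * D : ℕ) : K)) :
    p = q := by
  refine eq_of_infinite_eval_eq p q (Set.infinite_of_injective_forall_mem
    (f := fun m : ℕ ↦ ((c + (m + N) * D : ℕ) : K)) (fun m m' hm ↦ ?_)
    fun m ↦ h _ (Nat.le_add_left N m))
  simpa [hD.ne'] using hm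

end Interpolation

section Growth

variable {𝕜 : Type*} [NormedField 𝕜] [LinearOrder 𝕜] [IsStrictOrderedRing 𝕜]
  [OrderTopology 𝕜] [Archimedean 𝕜]

lemma not_forall_pow_le_eval_of_degree_lt {p : 𝕜[X]} {K : ℕ} (hp : p.degree < K) (c : 𝕜) :
    ¬ ∀ m : ℕ, ((m : 𝕜) + 1) ^ K ≤ p.eval (c * m) := by
  intro h
  have hcomp : (p.comp (C c * X)).degree ≤ p.degree := by
    rcases eq_or_ne p 0 with rfl | hp0
    · simp
    rw [degree_eq_natDegree hp0]
    refine degree_le_natDegree.trans (Nat.cast_le.2 (natDegree_comp_le.trans ?_))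
    simpa using Nat.mul_le_mul_left p.natDegree ((natDegree_C_mul_le c X).trans natDegree_X_le)
  have hdeg : (p.comp (C c * X)).degree < ((X + 1 : 𝕜[X]) ^ K).degree := by
    rw [degree_pow, ← C_1, degree_X_add_C, nsmul_one]
    exact hcomp.trans_lt hp
  obtain ⟨m, hm⟩ := (((div_tendsto_atTop_zero_of_degree_lt _ _ hdeg).comp
    tendsto_natCast_atTop_atTop).eventually (gt_mem_nhds one_pos)).exists
  have hpos : 0 < ((m : 𝕜) + 1) ^ K := by positivity
  simp only [Function.comp_apply, eval_comp, eval_mul, eval_C, eval_X, eval_pow, eval_add,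
    eval_one, div_lt_one hpos] at hm
  exact (h m).not_gt hm

end Growth

lemma finite_weightedSolutions {k : ℕ} {w : Fin k → ℕ} (hw : ∀ i, 0 < w i) (n : ℕ) :
    Finite {a : Fin k → ℕ // ∑ i, a i * w i = n} := by
  refine Set.Finite.to_subtype ((Set.finite_Iic fun _ ↦ n).subset fun a ha i ↦ ?_)
  calc a i ≤ a i * w i := Nat.le_mul_of_pos_right _ (hw i)
    _ ≤ ∑ i, a i * w i :=
      single_le_sum (f := fun i ↦ a i * w i) (fun _ _ ↦ Nat.zero_le _) (mem_univ i)
    _ = n := ha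

lemma hilbFn_zero (w : Fin 0 → ℕ) : hilbFn 0 w = Pi.single 0 1 := by
  ext n
  rcases eq_or_ne n 0 with rfl | hn
  · simp [hilbFn]
  · simp [hilbFn, hn, Ne.symm hn]

lemma sum_mul_eq_head_add_tail {k : ℕ} (a w : Fin (k + 1) → ℕ) :
    ∑ i, a i * w i = a 0 * w 0 + ∑ i, Fin.tail a i * Fin.tail w i :=
  Fin.sum_univ_succ _

def weightedSolutionsAddHeadEquiv {k : ℕ} (w : Fin (k + 1) → ℕ) (n : ℕ) :
    {a : Fin (k + 1) → ℕ // ∑ i, a i * w i = n + w 0} ≃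
      {a : Fin (k + 1) → ℕ // ∑ i, a i * w i = n} ⊕
        {b : Fin k → ℕ // ∑ i, b i * Fin.tail w i = n + w 0} where
  toFun a := if h : a.1 0 = 0 then .inr ⟨Fin.tail a.1, by
      have := a.2
      rwa [sum_mul_eq_head_add_tail, h, zero_mul, zero_add] at this⟩
    else .inl ⟨Fin.cons (a.1 0 - 1) (Fin.tail a.1), by
      have := a.2
      rw [sum_mul_eq_head_add_tail] at this
      rw [sum_mul_eq_head_add_tail, Fin.cons_zero, Fin.tail_cons]
      obtain ⟨j, hj⟩ := Nat.exists_eq_add_one_of_ne_zero h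
      rw [hj, add_one_mul] at this
      rw [hj, Nat.add_sub_cancel]
      omega⟩
  invFun
    | .inl a => ⟨Fin.cons (a.1 0 + 1) (Fin.tail a.1), by
      rw [sum_mul_eq_head_add_tail, Fin.cons_zero, Fin.tail_cons, add_one_mul, add_right_comm,
        ← sum_mul_eq_head_add_tail, a.2]⟩
    | .inr b => ⟨Fin.cons 0 b.1, by
      rw [sum_mul_eq_head_add_tail, Fin.cons_zero, Fin.tail_cons, zero_mul, zero_add, b.2]⟩
  left_inv a := by
    by_cases h : a.1 0 = 0
    · simp only [h, dite_true]
      ext i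
      refine Fin.cases ?_ (fun i ↦ ?_) i <;> simp [h, Fin.tail]
    · simp only [h, dite_false]
      ext i
      refine Fin.cases ?_ (fun i ↦ ?_) i
      · simp only [Fin.cons_zero]
        omega
      · simp [Fin.tail]
  right_inv
    | .inl a => by simp [Fin.cons_self_tail]
    | .inr b => by simp

lemma hilbFn_add_head {k : ℕ} {w : Fin (k + 1) → ℕ} (hw : ∀ i, 0 < w i) (n : ℕ) :
    hilbFn (k + 1) w (n + w 0) = hilbFn (k + 1) w n + hilbFn k (Fin.tail w) (n + w 0) := by
  have := finite_weightedSolutions hw n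
  have := finite_weightedSolutions (w := Fin.tail w) (fun i ↦ hw i.succ) (n + w 0)
  rw [hilbFn, Nat.card_congr (weightedSolutionsAddHeadEquiv w n), Nat.card_sum]
  rfl

section Annihilation

variable {R : Type*} [CommRing R]

lemma aeval_seqShift_prod_hilbFn {k : ℕ} {w : Fin k → ℕ} (hw : ∀ i, 0 < w i) :
    aeval seqShift (∏ i, (X ^ w i - 1 : R[X])) (fun n ↦ (hilbFn k w n : R)) =
      (seqShift ^ ∑ i, w i) (Pi.single 0 1) := by
  induction k with
  | zero =>
    ext n
    simp [hilbFn_zero, Pi.single_apply]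
  | succ k ih =>
    have hhead : fwdDiff (w 0) (fun n ↦ (hilbFn (k + 1) w n : R)) =
        (seqShift ^ w 0) (fun n ↦ (hilbFn k (Fin.tail w) n : R)) := by
      ext n
      simp [fwdDiff, seqShift_pow_apply, hilbFn_add_head hw]
    have htail : aeval seqShift (∏ i : Fin k, (X ^ w i.succ - 1 : R[X]))
        (fun n ↦ (hilbFn k (Fin.tail w) n : R)) =
          (seqShift ^ ∑ i : Fin k, w i.succ) (Pi.single 0 1) :=
      ih fun i ↦ hw i.succ
    rw [Fin.prod_univ_succ, mul_comm, map_mul, Module.End.mul_apply, aeval_seqShift_X_pow_sub_one,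
      hhead, aeval_seqShift_seqShift_pow_apply, htail, ← Module.End.mul_apply, ← pow_add,
      Fin.sum_univ_succ]

lemma aeval_seqShift_prod_hilbFn_eq_zero {k : ℕ} {w : Fin k → ℕ} (hw : ∀ i, 0 < w i)
    (hk : 0 < k) :
    aeval seqShift (∏ i, (X ^ w i - 1 : R[X])) (fun n ↦ (hilbFn k w n : R)) = 0 := by
  have hpos : 0 < ∑ i, w i := sum_pos (fun i _ ↦ hw i) ⟨⟨0, hk⟩, mem_univ _⟩
  ext n
  rw [aeval_seqShift_prod_hilbFn hw, seqShift_pow_apply, Pi.single_eq_of_ne (by omega)]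
  rfl

end Annihilation

lemma pow_le_hilbFn {K : ℕ} {w : Fin (K + 1) → ℕ} (hw : ∀ i, 0 < w i) {D : ℕ} (hD : 0 < D)
    (hwD : ∀ i, w i ∣ D) (m : ℕ) : (m + 1) ^ K ≤ hilbFn (K + 1) w (K * m * D) := by
  have := finite_weightedSolutions hw (K * m * D)
  -- Exponents `b i * (D / w i)` with `b i ≤ m` each contribute a multiple of `D`; the first
  -- exponent makes up the rest of `K * m * D`.
  let F : (Fin K → Fin (m + 1)) → {a : Fin (K + 1) → ℕ // ∑ i, a i * w i = K * m * D} :=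
    fun b ↦
    ⟨Fin.cons ((K * m - ∑ i, (b i : ℕ)) * (D / w 0)) fun i ↦ b i * (D / w i.succ), by
      have hb : ∑ i, (b i : ℕ) ≤ K * m := by
        simpa using sum_le_sum fun i (_ : i ∈ univ) ↦ Nat.lt_succ_iff.1 (b i).2
      rw [sum_mul_eq_head_add_tail, Fin.cons_zero, Fin.tail_cons]
      simp only [Fin.tail, mul_assoc, Nat.div_mul_cancel (hwD _)]
      rw [← sum_mul, ← add_mul, Nat.sub_add_cancel hb]
      ring⟩
  have hF : Function.Injective F := by
    intro b b' h
    funext i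
    have := congrFun (congrArg Subtype.val h) i.succ
    simp only [F, Fin.cons_succ] at this
    exact Fin.ext (Nat.eq_of_mul_eq_mul_right (Nat.div_pos (Nat.le_of_dvd hD (hwD _)) (hw _)) this)
  simpa [hilbFn] using Nat.card_le_card_of_injective F hF

noncomputable def cyclotomicCofactor {k : ℕ} (w : Fin k → ℕ) : ℚ[X] :=
  ∏ i, ∏ e ∈ (w i).divisors.erase 1, cyclotomic e ℚ

lemma prod_X_pow_sub_one_eq {k : ℕ} {w : Fin k → ℕ} (hw : ∀ i, 0 < w i) :
    ∏ i, (X ^ w i - 1 : ℚ[X]) = (X - 1) ^ k * cyclotomicCofactor w := by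
  have h : ∀ i,
      (X ^ w i - 1 : ℚ[X]) = (X - 1) * ∏ e ∈ (w i).divisors.erase 1, cyclotomic e ℚ :=
    fun i ↦ by
      rw [← prod_cyclotomic_eq_X_pow_sub_one (hw i), ← cyclotomic_one ℚ]
      exact (mul_prod_erase _ _ (Nat.one_mem_divisors.2 (hw i).ne')).symm
  simp_rw [h, prod_mul_distrib, prod_const, card_univ, Fintype.card_fin, cyclotomicCofactor]

lemma isCoprime_X_sub_one_pow_cyclotomicCofactor {k : ℕ} (w : Fin k → ℕ) (j : ℕ) :
    IsCoprime ((X - 1 : ℚ[X]) ^ j) (cyclotomicCofactor w) := by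
  refine .pow_left (.prod_right fun i _ ↦ .prod_right fun e he ↦ ?_)
  rw [← cyclotomic_one ℚ]
  exact cyclotomic.isCoprime_rat (ne_of_mem_erase he).symm

lemma cyclotomicCofactor_dvd {k : ℕ} {w : Fin k → ℕ} {D δ : ℕ} (hD : 0 < D)
    (hwD : ∀ i, w i ∣ D) (hδ : ∀ e ≠ 1, #{i | e ∣ w i} ≤ δ) :
    cyclotomicCofactor w ∣ (X ^ D - 1) ^ δ := by
  classical
  have hswap : cyclotomicCofactor w =
      ∏ e ∈ D.divisors.erase 1, cyclotomic e ℚ ^ #{i | e ∣ w i} := by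
    rw [cyclotomicCofactor, prod_comm' (t' := D.divisors.erase 1) (s' := fun e ↦ {i | e ∣ w i})]
    · simp_rw [prod_const]
    · intro i e
      simp only [mem_univ, true_and, mem_erase, Nat.mem_divisors, mem_filter]
      constructor
      · rintro ⟨he, hei, -⟩
        exact ⟨hei, he, hei.trans (hwD i), hD.ne'⟩
      · rintro ⟨hei, he, -, -⟩
        exact ⟨he, hei, (Nat.pos_of_dvd_of_pos (hwD i) hD).ne'⟩
  rw [hswap, ← prod_cyclotomic_eq_X_pow_sub_one hD, ← prod_pow]
  exact (prod_dvd_prod_of_dvd _ _ fun e he ↦ pow_dvd_pow _ (hδ e (ne_of_mem_erase he))).trans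
    (prod_dvd_prod_of_subset _ _ _ (erase_subset _ _))

lemma card_filter_dvd_le_of_isGreatest {k δ : ℕ} {w : Fin k → ℕ}
    (hδ : IsGreatest {m | ∃ I : Finset (Fin k), I.gcd w ≠ 1 ∧ I.card = m} δ) {e : ℕ}
    (he : e ≠ 1) :
    #{i | e ∣ w i} ≤ δ :=
  hδ.2 ⟨_, fun hgcd ↦ he (Nat.dvd_one.1 (hgcd ▸ dvd_gcd fun _ hi ↦ (mem_filter.1 hi).2)),
    rfl⟩

lemma lt_of_isGreatest_of_gcd_eq_one {k δ : ℕ} {w : Fin k → ℕ} (hgcd : univ.gcd w = 1)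
    (hδ : IsGreatest {m | ∃ I : Finset (Fin k), I.gcd w ≠ 1 ∧ I.card = m} δ) : δ < k := by
  obtain ⟨I, hI, rfl⟩ := hδ.1
  simpa using (card_lt_iff_ne_univ I).2 fun h ↦ hI (by rwa [h])

theorem exists_hilbFn_eq_add {k : ℕ} {w : Fin k → ℕ} (hw : ∀ i, 0 < w i) (hk : 0 < k)
    {D δ : ℕ} (hD : 0 < D) (hwD : ∀ i, w i ∣ D)
    (hδ : ∀ e ≠ 1, #{i | e ∣ w i} ≤ δ) :
    ∃ Q : ℚ[X], Q.degree < k ∧ ∃ T : ℕ → ℚ[X], (∀ c, (T c).degree < δ) ∧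
      ∀ c m, (hilbFn k w (c + m * D) : ℚ) =
        Q.eval ((c + m * D : ℕ) : ℚ) + (T c).eval ((c + m * D : ℕ) : ℚ) := by
  have hker : (fun n ↦ (hilbFn k w n : ℚ)) ∈
      LinearMap.ker (aeval seqShift ((X - 1) ^ k * cyclotomicCofactor w)) := by
    rw [LinearMap.mem_ker, ← prod_X_pow_sub_one_eq hw]
    exact aeval_seqShift_prod_hilbFn_eq_zero hw hk
  rw [← sup_ker_aeval_eq_ker_aeval_mul_of_coprime _
    (isCoprime_X_sub_one_pow_cyclotomicCofactor w k)] at hker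
  obtain ⟨u, hu, v, hv, huv⟩ := Submodule.mem_sup.1 hker
  have hu' : (fwdDiff 1)^[k] u = 0 := by
    rw [← aeval_seqShift_X_pow_sub_one_pow, pow_one]
    exact hu
  have hv' : (fwdDiff D)^[δ] v = 0 := by
    obtain ⟨g, hg⟩ := cyclotomicCofactor_dvd hD hwD hδ
    rw [← aeval_seqShift_X_pow_sub_one_pow, hg, mul_comm, map_mul, Module.End.mul_apply,
      LinearMap.mem_ker.1 hv, map_zero]
  obtain ⟨Q, hQ, hQu⟩ := exists_polynomial_of_fwdDiff_iter_eq_zero hu'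
  choose T hT hTv using exists_polynomial_on_arithProg_of_fwdDiff_iter_eq_zero hD hv'
  refine ⟨Q, hQ, T, hT, fun c m ↦ ?_⟩
  rw [← hQu, ← hTv]
  exact (congrFun huv _).symm

lemma natDegree_eq_of_hilbFn_eq_add {k : ℕ} {w : Fin k → ℕ} (hw : ∀ i, 0 < w i) {D δ : ℕ}
    (hD : 0 < D) (hwD : ∀ i, w i ∣ D) (hδk : δ < k) {Q T : ℚ[X]} (hQ : Q.degree < k)
    (hT : T.degree < δ)
    (h : ∀ m, (hilbFn k w (m * D) : ℚ) =
      Q.eval ((m * D : ℕ) : ℚ) + T.eval ((m * D : ℕ) : ℚ)) :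
    Q.natDegree = k - 1 := by
  obtain ⟨K, rfl⟩ := Nat.exists_eq_add_one_of_ne_zero (Nat.zero_lt_of_lt hδk).ne'
  rw [Nat.add_sub_cancel]
  refine le_antisymm (Nat.lt_succ_iff.1 ?_) (not_lt.1 fun hlt ↦ ?_)
  · rcases eq_or_ne Q 0 with rfl | hQ0
    · simp
    · exact (natDegree_lt_iff_degree_lt hQ0).2 hQ
  · have hdeg : (Q + T).degree < K := (degree_add_le _ _).trans_lt
      (max_lt (degree_le_natDegree.trans_lt (Nat.cast_lt.2 hlt))
        (hT.trans_le (Nat.cast_le.2 (Nat.lt_succ_iff.1 hδk))))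
    refine not_forall_pow_le_eval_of_degree_lt hdeg (K * D) fun m ↦ ?_
    calc ((m : ℚ) + 1) ^ K = ((m + 1) ^ K : ℕ) := by push_cast; rfl
      _ ≤ hilbFn (K + 1) w (K * m * D) := Nat.cast_le.2 (pow_le_hilbFn hw hD hwD m)
      _ = (Q + T).eval ((K * D : ℚ) * m) := by
        rw [h, eval_add]
        push_cast
        ring_nf

theorem stmt10 (k : ℕ) (w : Fin k → ℕ) (hw : ∀ i, 0 < w i)
    (hgcd : Finset.univ.gcd w = 1)
    (δ : ℕ)
    (hδ : IsGreatest {m | ∃ I : Finset (Fin k), I.gcd w ≠ 1 ∧ I.card = m} δ)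
    (P : ZMod (Finset.univ.lcm w) → Polynomial ℚ)
    (hP : ∃ N : ℕ, ∀ n : ℕ, N ≤ n →
      (P (n : ZMod (Finset.univ.lcm w))).eval (n : ℚ) = hilbFn k w n) :
    (∃ Q : Polynomial ℚ, Q.natDegree = k - 1 ∧
        ∃ T : ZMod (Finset.univ.lcm w) → Polynomial ℚ,
          (∀ i, P i = Q + T i) ∧ ∀ i, (T i).degree < (δ : WithBot ℕ)) ∧
      ∀ r : ℕ, δ ≤ r → r ≤ k - 1 →
        ∀ i j, (P i).coeff r = (P j).coeff r := by
  obtain ⟨N, hN⟩ := hP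
  have hwD : ∀ i, w i ∣ univ.lcm w := fun i ↦ dvd_lcm (mem_univ i)
  have hD : 0 < univ.lcm w := Nat.pos_of_ne_zero fun h ↦ by
    obtain ⟨i, -, hi⟩ := lcm_eq_zero_iff.1 h
    exact (hw i).ne' hi
  have hδk := lt_of_isGreatest_of_gcd_eq_one hgcd hδ
  obtain ⟨Q, hQ, T, hT, hQT⟩ := exists_hilbFn_eq_add hw (by omega) hD hwD
    fun e he ↦ card_filter_dvd_le_of_isGreatest hδ he
  have : NeZero (univ.lcm w) := ⟨hD.ne'⟩
  have hPQT : ∀ i, P i = Q + T i.val := fun i ↦ eq_of_forall_eval_add_mul_eq (N := N) hD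
    fun m hm ↦ by
      rw [eval_add, ← hQT, ← hN _ (le_add_left (hm.trans (Nat.le_mul_of_pos_right m hD)))]
      simp
  have hcoeff : ∀ r, δ ≤ r → ∀ i, (P i).coeff r = Q.coeff r := fun r hr i ↦ by
    rw [hPQT, coeff_add, coeff_eq_zero_of_degree_lt ((hT _).trans_le (Nat.cast_le.2 hr)), add_zero]
  have hQdeg : Q.natDegree = k - 1 :=
    natDegree_eq_of_hilbFn_eq_add hw hD hwD hδk hQ (hT 0) fun m ↦ by simpa using hQT 0 m
  exact ⟨⟨Q, hQdeg, fun i ↦ T i.val, hPQT, fun i ↦ hT _⟩,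
    fun r hr _ i j ↦ by rw [hcoeff r hr, hcoeff r hr]⟩
end
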